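/- Let G_sw be a connected strength-weighted graph and F a regular function for G_sw. If {E_1, …, E_k} is a c-partition of E(G), e = uv ∈ E_i, U = ℓ_i(u), V = ℓ_i(v), and E = UV is the corresponding edge of the strength-weighted quotient graph G_i = G_sw/E_i, then F(e|G_sw) = F(E|G_i). -/

import Mathlib

open SimpleGraph

namespace SzegedCut

variable {V : Type*}

/-- `N_u(e|G)` for the edge `e = uv`: vertices strictly closer to `u` than to `v`. -/
def Nset (G : SimpleGraph V) (u v : V) : Set V := {x | G.dist u x < G.dist v x}

/-- `N_0(e|G)` for the edge `e = uv`: vertices equidistant from `u` and `v`. -/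
def N0set (G : SimpleGraph V) (u v : V) : Set V := {x | G.dist u x = G.dist v x}

/-- Distance from a vertex to an edge: minimum over the endpoints of the edge. -/
noncomputable def eDist (G : SimpleGraph V) (u : V) : Sym2 V → ℕ :=
  Sym2.lift ⟨fun x y => min (G.dist u x) (G.dist u y), fun x y => min_comm _ _⟩

/-- `M_u(e|G)` for the edge `e = uv`: edges strictly closer to `u` than to `v`. -/
def Mset (G : SimpleGraph V) (u v : V) : Set (Sym2 V) :=
  {f | f ∈ G.edgeSet ∧ eDist G u f < eDist G v f}

/-- `M_0(e|G)` for the edge `e = uv`: edges equidistant from `u` and `v`. -/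
def M0set (G : SimpleGraph V) (u v : V) : Set (Sym2 V) :=
  {f | f ∈ G.edgeSet ∧ eDist G u f = eDist G v f}

/-- The Djoković–Winkler relation `Θ` on the edges of `G`. -/
def Theta (G : SimpleGraph V) (e₁ e₂ : Sym2 V) : Prop :=
  e₁ ∈ G.edgeSet ∧ e₂ ∈ G.edgeSet ∧
    ∃ u₁ v₁ u₂ v₂, e₁ = s(u₁, v₁) ∧ e₂ = s(u₂, v₂) ∧
      G.dist u₁ u₂ + G.dist v₁ v₂ ≠ G.dist u₁ v₂ + G.dist u₂ v₁

/-- `Θ*`, the transitive closure of the Djoković–Winkler relation. -/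
def ThetaStar (G : SimpleGraph V) : Sym2 V → Sym2 V → Prop :=
  Relation.TransGen (Theta G)

/-- A c-partition of `E(G)`: a partition of the edge set each of whose parts is a
union of `Θ*`-classes (equivalently, is closed under `Θ*`). -/
def IsCPartition (G : SimpleGraph V) {k : ℕ} (P : Fin k → Set (Sym2 V)) : Prop :=
  (⋃ i, P i) = G.edgeSet ∧
  (∀ i j, i ≠ j → Disjoint (P i) (P j)) ∧
  (∀ i, ∀ e ∈ P i, ∀ f, ThetaStar G e f → f ∈ P i)

/-- The connected components of `G \ F`, i.e. the vertices of the quotient graph `G/F`. -/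
abbrev Comp (G : SimpleGraph V) (F : Set (Sym2 V)) := (G.deleteEdges F).ConnectedComponent

/-- `ℓ(u)`: the connected component of `G \ F` containing `u`. -/
def proj (G : SimpleGraph V) (F : Set (Sym2 V)) (u : V) : Comp G F :=
  (G.deleteEdges F).connectedComponentMk u

/-- The quotient graph `G/F`: vertices are the connected components of `G \ F`,
two components being adjacent iff some vertex of one is adjacent in `G` to a
vertex of the other. -/
def quotGraph (G : SimpleGraph V) (F : Set (Sym2 V)) : SimpleGraph (Comp G F) where
  Adj X Y := X ≠ Y ∧ ∃ x y, G.Adj x y ∧ proj G F x = X ∧ proj G F y = Y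
  symm := ⟨by
    rintro X Y ⟨hne, x, y, hadj, hx, hy⟩
    exact ⟨hne.symm, y, x, hadj.symm, hy, hx⟩⟩
  loopless := ⟨by rintro X ⟨hne, -⟩; exact hne rfl⟩

/-- `Ê` for a quotient edge `E`: the edges of `G` joining the two components of `E`. -/
def hatE (G : SimpleGraph V) (F : Set (Sym2 V)) (E : Sym2 (Comp G F)) : Set (Sym2 V) :=
  {e | e ∈ G.edgeSet ∧ e.map (proj G F) = E}

/-- `E(X)` for a component `X` of `G \ F`: the edges of `G \ F` lying inside `X`. -/
def compEdges (G : SimpleGraph V) (F : Set (Sym2 V)) (X : Comp G F) : Set (Sym2 V) :=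
  {f | f ∈ (G.deleteEdges F).edgeSet ∧ ∀ x ∈ f, x ∈ X.supp}

/-- Sum of a weight function over a set. -/
noncomputable def vsum {α : Type*} (s : Set α) (w : α → ℝ) : ℝ := ∑ᶠ x ∈ s, w x

/-- `n_u(e|G_sw)` for `e = uv`. -/
noncomputable def nval (G : SimpleGraph V) (wv : V → ℝ) (u v : V) : ℝ :=
  vsum (Nset G u v) wv

/-- `n_0(e|G_sw)` for `e = uv`. -/
noncomputable def n0val (G : SimpleGraph V) (wv : V → ℝ) (u v : V) : ℝ :=
  vsum (N0set G u v) wv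

/-- `m_u(e|G_sw)` for `e = uv`. -/
noncomputable def mval (G : SimpleGraph V) (sv : V → ℝ) (se : Sym2 V → ℝ) (u v : V) : ℝ :=
  vsum (Nset G u v) sv + vsum (Mset G u v) se

/-- `m_0(e|G_sw)` for `e = uv`. -/
noncomputable def m0val (G : SimpleGraph V) (sv : V → ℝ) (se : Sym2 V → ℝ) (u v : V) : ℝ :=
  vsum (N0set G u v) sv + vsum (M0set G u v) se

lemma N0set_comm (G : SimpleGraph V) (u v : V) : N0set G u v = N0set G v u :=
  Set.ext fun _ => eq_comm

lemma M0set_comm (G : SimpleGraph V) (u v : V) : M0set G u v = M0set G v u :=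
  Set.ext fun _ => and_congr_right fun _ => eq_comm

lemma n0val_comm (G : SimpleGraph V) (wv : V → ℝ) (u v : V) :
    n0val G wv u v = n0val G wv v u := by rw [n0val, n0val, N0set_comm]

lemma m0val_comm (G : SimpleGraph V) (sv : V → ℝ) (se : Sym2 V → ℝ) (u v : V) :
    m0val G sv se u v = m0val G sv se v u := by
  rw [m0val, m0val, N0set_comm, M0set_comm]

/-- A regular function of six variables: symmetric in the first two and in the
next two coordinates. -/
def IsRegular (F : ℝ → ℝ → ℝ → ℝ → ℝ → ℝ → ℝ) : Prop :=
  ∀ a b c d x y, F a b c d x y = F b a d c x y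

/-- `F(e|G_sw)` for a regular function `F`. -/
noncomputable def FEdge (G : SimpleGraph V) (wv sv : V → ℝ) (se : Sym2 V → ℝ)
    (F : ℝ → ℝ → ℝ → ℝ → ℝ → ℝ → ℝ) (hF : IsRegular F) : Sym2 V → ℝ :=
  Sym2.lift ⟨fun u v =>
      F (nval G wv u v) (nval G wv v u) (mval G sv se u v) (mval G sv se v u)
        (n0val G wv u v) (m0val G sv se u v),
    fun u v => by dsimp only; rw [hF, n0val_comm, m0val_comm]⟩

/-- The general Szeged-like topological index `TI_F(G_sw)`. -/
noncomputable def TI (G : SimpleGraph V) (wv sv : V → ℝ) (we se : Sym2 V → ℝ)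
    (F : ℝ → ℝ → ℝ → ℝ → ℝ → ℝ → ℝ) (hF : IsRegular F) : ℝ :=
  ∑ᶠ e ∈ G.edgeSet, we e * FEdge G wv sv se F hF e

/-- Vertex weight `w_v^i` of the strength-weighted quotient graph. -/
noncomputable def qwv (G : SimpleGraph V) (F : Set (Sym2 V)) (wv : V → ℝ)
    (X : Comp G F) : ℝ :=
  vsum X.supp wv

/-- Vertex weight `s_v^i` of the strength-weighted quotient graph. -/
noncomputable def qsv (G : SimpleGraph V) (F : Set (Sym2 V)) (sv : V → ℝ)
    (se : Sym2 V → ℝ) (X : Comp G F) : ℝ :=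
  vsum (compEdges G F X) se + vsum X.supp sv

/-- Edge weight `w_e^i` of the strength-weighted quotient graph. -/
noncomputable def qwe (G : SimpleGraph V) (F : Set (Sym2 V)) (we : Sym2 V → ℝ)
    (E : Sym2 (Comp G F)) : ℝ :=
  vsum (hatE G F E) we

/-- Edge weight `s_e^i` of the strength-weighted quotient graph. -/
noncomputable def qse (G : SimpleGraph V) (F : Set (Sym2 V)) (se : Sym2 V → ℝ)
    (E : Sym2 (Comp G F)) : ℝ :=
  vsum (hatE G F E) se


section CutCore

variable {G : SimpleGraph V}

open Classical in
/-- number of darts of a walk whose edge lies in `C`. -/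
noncomputable def cnt (C : Set (Sym2 V)) : ∀ {a b : V}, G.Walk a b → ℕ
  | _, _, .nil => 0
  | _, _, .cons (u := a) (v := c) _ p => (if s(a, c) ∈ C then 1 else 0) + cnt C p

open Classical in
/-- the potential `Φ_P(w) = Σ_{(x,y) a C-dart of P} (d(x,w) - d(y,w))`. -/
noncomputable def phi (C : Set (Sym2 V)) : ∀ {a b : V}, G.Walk a b → V → ℤ
  | _, _, .nil, _ => 0
  | _, _, .cons (u := a) (v := c) _ p, w =>
      (if s(a, c) ∈ C then ((G.dist a w : ℤ) - G.dist c w) else 0) + phi C p w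

@[simp] lemma cnt_nil {C : Set (Sym2 V)} {a : V} : cnt C (.nil : G.Walk a a) = 0 := rfl

open Classical in
lemma cnt_cons {C : Set (Sym2 V)} {a c b : V} (h : G.Adj a c) (p : G.Walk c b) :
    cnt C (.cons h p) = (if s(a, c) ∈ C then 1 else 0) + cnt C p := rfl

@[simp] lemma phi_nil {C : Set (Sym2 V)} {a : V} (w : V) :
    phi C (.nil : G.Walk a a) w = 0 := rfl

open Classical in
lemma phi_cons {C : Set (Sym2 V)} {a c b : V} (h : G.Adj a c) (p : G.Walk c b) (w : V) :
    phi C (.cons h p) w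
      = (if s(a, c) ∈ C then ((G.dist a w : ℤ) - G.dist c w) else 0) + phi C p w := rfl

lemma cnt_append {C : Set (Sym2 V)} {a b c : V} (p : G.Walk a b) (q : G.Walk b c) :
    cnt C (p.append q) = cnt C p + cnt C q := by
  induction p with
  | nil => simp
  | cons h p ih => simp only [Walk.cons_append, cnt_cons, ih]; ring

variable (hG : G.Connected) {C : Set (Sym2 V)}
  (hCE : C ⊆ G.edgeSet) (hCcl : ∀ f ∈ C, ∀ g, Theta G f g → g ∈ C)

lemma adjC (h : s(x, y) ∈ C) (hCE : C ⊆ G.edgeSet) : G.Adj x y := (G.mem_edgeSet).mp (hCE h)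

include hG in
lemma dist_adj_le {a c : V} (h : G.Adj a c) (w : V) : G.dist w c ≤ G.dist w a + 1 := by
  have := hG.dist_triangle (u := w) (v := a) (w := c)
  have h1 : G.dist a c = 1 := dist_eq_one_iff_adj.mpr h
  omega

include hCE hCcl in
/-- Invariance of the `D`-function of a `C`-edge across a non-`C`-edge. -/
lemma invar_not_mem {x y a b : V} (hxy : s(x, y) ∈ C) (hab : G.Adj a b)
    (hnab : s(a, b) ∉ C) :
    (G.dist x a : ℤ) - G.dist y a = (G.dist x b : ℤ) - G.dist y b := by
  by_contra hne
  apply hnab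
  refine hCcl _ hxy _ ⟨hCE hxy, hab, x, y, a, b, rfl, rfl, ?_⟩
  intro hEq
  apply hne
  have h2 : G.dist a y = G.dist y a := dist_comm
  have : (G.dist x a : ℤ) + G.dist y b = G.dist x b + G.dist a y := by exact_mod_cast hEq
  rw [h2] at this
  linarith

include hCE hCcl in
lemma invar_reach {x y a b : V} (hxy : s(x, y) ∈ C)
    (h : (G.deleteEdges C).Reachable a b) :
    (G.dist x a : ℤ) - G.dist y a = (G.dist x b : ℤ) - G.dist y b := by
  obtain ⟨W⟩ := h
  induction W with
  | nil => rfl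
  | cons hadj p ih =>
    obtain ⟨hadj', hn⟩ := (SimpleGraph.deleteEdges_adj).mp hadj
    rw [invar_not_mem hCE hCcl hxy hadj' hn]
    exact ih

include hCE hCcl in
lemma phi_delta_mem {p q a b : V} (P : G.Walk p q) (hab : G.Adj a b)
    (hm : s(a, b) ∈ C) :
    phi C P b - phi C P a
      = ((G.dist p b : ℤ) - G.dist q b) - ((G.dist p a : ℤ) - G.dist q a) := by
  induction P with
  | nil => simp
  | @cons p c q h P ih =>
    rw [phi_cons, phi_cons]
    by_cases hm' : s(p, c) ∈ C
    · rw [if_pos hm', if_pos hm']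
      have := ih
      push_cast
      linarith
    · rw [if_neg hm', if_neg hm']
      have hinv := invar_not_mem hCE hCcl hm h hm'
      have c1 : G.dist a p = G.dist p a := dist_comm
      have c2 : G.dist b p = G.dist p b := dist_comm
      have c3 : G.dist a c = G.dist c a := dist_comm
      have c4 : G.dist b c = G.dist c b := dist_comm
      rw [c1, c2, c3, c4] at hinv
      have := ih
      linarith

include hCE hCcl in
lemma phi_delta_not_mem {p q a b : V} (P : G.Walk p q) (hab : G.Adj a b)
    (hn : s(a, b) ∉ C) : phi C P b = phi C P a := by
  induction P with
  | nil => simp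
  | @cons p c q h P ih =>
    rw [phi_cons, phi_cons]
    by_cases hm' : s(p, c) ∈ C
    · rw [if_pos hm', if_pos hm']
      have hinv := invar_not_mem hCE hCcl hm' hab hn
      linarith
    · rw [if_neg hm', if_neg hm']
      linarith

include hG hCE hCcl in
lemma phi_le {p q a b : V} (P : G.Walk p q) (W : G.Walk a b) :
    phi C P b - phi C P a ≤ 2 * cnt C W := by
  induction W with
  | nil => simp
  | @cons a c b h W ih =>
    rw [cnt_cons]
    by_cases hm : s(a, c) ∈ C
    · rw [if_pos hm]
      have h1 := phi_delta_mem hCE hCcl P h hm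
      have l1 := dist_adj_le hG h p
      have l2 := dist_adj_le hG h.symm p
      have l3 := dist_adj_le hG h q
      have l4 := dist_adj_le hG h.symm q
      have := ih
      push_cast
      push_cast at h1 l1 l2 l3 l4
      linarith
    · rw [if_neg hm]
      have h1 := phi_delta_not_mem hCE hCcl P h hm
      have := ih
      push_cast
      linarith

include hG hCE hCcl in
lemma phi_geodesic {p q : V} (P : G.Walk p q) (hlen : P.length = G.dist p q) :
    phi C P q - phi C P p = 2 * (cnt C P : ℤ) := by
  induction P with
  | nil => simp
  | @cons p c q h P ih =>
    rw [Walk.length_cons] at hlen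
    have h1 : G.dist p c = 1 := dist_eq_one_iff_adj.mpr h
    have h2 : G.dist c q ≤ P.length := dist_le P
    have h3 : G.dist p q ≤ G.dist p c + G.dist c q := hG.dist_triangle
    have h4 : P.length = G.dist c q := by omega
    have hIH := ih h4
    have hpq : G.dist p q = P.length + 1 := by omega
    have hcq : G.dist c q = P.length := h4.symm
    have hcp : G.dist c p = 1 := dist_comm.trans h1
    have hqp : G.dist q p = P.length + 1 := dist_comm.trans hpq
    have hqc : G.dist q c = P.length := dist_comm.trans hcq
    rw [phi_cons, phi_cons, cnt_cons]
    by_cases hm : s(p, c) ∈ C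
    · rw [if_pos hm, if_pos hm, if_pos hm]
      have hd := phi_delta_mem hCE hCcl P h.symm (by rwa [Sym2.eq_swap])
      rw [G.dist_self] at hd
      have hpp : G.dist p p = 0 := dist_self
      rw [h1, hcq, hpq, hcp, hqp, hqc, hpp] at *
      push_cast at hd hIH ⊢
      linarith
    · rw [if_neg hm, if_neg hm, if_neg hm]
      have hd := phi_delta_not_mem hCE hCcl P h hm
      push_cast
      linarith

end CutCore


section CutCore2

variable {G : SimpleGraph V} (hG : G.Connected) {C : Set (Sym2 V)}
  (hCE : C ⊆ G.edgeSet) (hCcl : ∀ f ∈ C, ∀ g, Theta G f g → g ∈ C)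

/-- a chosen geodesic walk. -/
noncomputable def geo (hG : G.Connected) (a b : V) : G.Walk a b :=
  (hG.exists_walk_length_eq_dist a b).choose

lemma geo_length (a b : V) : (geo hG a b).length = G.dist a b :=
  (hG.exists_walk_length_eq_dist a b).choose_spec

/-- number of `C`-edges on a geodesic. -/
noncomputable def gc (hG : G.Connected) (C : Set (Sym2 V)) (a b : V) : ℕ :=
  cnt C (geo hG a b)

include hG hCE hCcl

lemma gc_le {a b : V} (W : G.Walk a b) : gc hG C a b ≤ cnt C W := by
  have h1 := phi_geodesic hG hCE hCcl (geo hG a b) (geo_length hG a b)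
  have h2 := phi_le hG hCE hCcl (geo hG a b) W
  rw [h1] at h2
  have : (gc hG C a b : ℤ) ≤ cnt C W := by unfold gc; linarith
  exact_mod_cast this

lemma cnt_geodesic {a b : V} (P : G.Walk a b) (h : P.length = G.dist a b) :
    cnt C P = gc hG C a b := by
  refine le_antisymm ?_ (gc_le hG hCE hCcl P)
  have h1 := phi_geodesic hG hCE hCcl P h
  have h2 := phi_le hG hCE hCcl P (geo hG a b)
  rw [h1] at h2
  have : (cnt C P : ℤ) ≤ gc hG C a b := by unfold gc; linarith
  exact_mod_cast this

lemma gc_succ {u v z : V} (huv : s(u, v) ∈ C) (hd : G.dist u z + 1 = G.dist v z) :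
    gc hG C v z = gc hG C u z + 1 := by
  have hadj : G.Adj u v := adjC huv hCE
  have hvu : s(v, u) ∈ C := by rwa [Sym2.eq_swap]
  have hW : (Walk.cons hadj.symm (geo hG u z)).length = G.dist v z := by
    rw [Walk.length_cons, geo_length]; omega
  have := cnt_geodesic hG hCE hCcl _ hW
  rw [cnt_cons, if_pos hvu] at this
  rw [← this]
  unfold gc
  omega

lemma gc_eq_le {u v z : V} (huv : s(u, v) ∈ C) (hd : G.dist u z = G.dist v z) :
    gc hG C u z ≤ gc hG C v z := by
  have hadj : G.Adj u v := adjC huv hCE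
  have h1 := phi_geodesic hG hCE hCcl (geo hG u z) (geo_length hG u z)
  have h2 := phi_le hG hCE hCcl (geo hG u z) (geo hG v z)
  have h3 := phi_delta_mem hCE hCcl (geo hG u z) hadj huv
  have e1 : G.dist u v = 1 := dist_eq_one_iff_adj.mpr hadj
  have e2 : G.dist u u = 0 := dist_self
  have e3 : G.dist z v = G.dist v z := dist_comm
  have e4 : G.dist z u = G.dist u z := dist_comm
  rw [e1, e2, e3, e4] at h3
  -- h3 : phi (geo u z) v - phi (geo u z) u = (1 - d v z) - (0 - d u z) = 1 (using hd)
  have key : (2 : ℤ) * gc hG C u z ≤ 2 * gc hG C v z + 1 := by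
    have : phi C (geo hG u z) z - phi C (geo hG u z) v ≤ 2 * cnt C (geo hG v z) :=
      phi_le hG hCE hCcl (geo hG u z) (geo hG v z)
    rw [hd] at h3
    unfold gc
    push_cast at h3 ⊢
    linarith [h1, this, h3]
  omega

lemma gc_eq {u v z : V} (huv : s(u, v) ∈ C) (hd : G.dist u z = G.dist v z) :
    gc hG C u z = gc hG C v z := by
  have hvu : s(v, u) ∈ C := by rwa [Sym2.eq_swap]
  exact le_antisymm (gc_eq_le hG hCE hCcl huv hd) (gc_eq_le hG hCE hCcl hvu hd.symm)

end CutCore2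

section CutQuot

variable {G : SimpleGraph V} (hG : G.Connected) {C : Set (Sym2 V)}
  (hCE : C ⊆ G.edgeSet) (hCcl : ∀ f ∈ C, ∀ g, Theta G f g → g ∈ C)

lemma proj_eq_iff {a b : V} :
    proj G C a = proj G C b ↔ (G.deleteEdges C).Reachable a b :=
  SimpleGraph.ConnectedComponent.eq

lemma proj_eq_of_not_mem {a b : V} (h : G.Adj a b) (hn : s(a, b) ∉ C) :
    proj G C a = proj G C b :=
  (proj_eq_iff).mpr ((SimpleGraph.deleteEdges_adj.mpr ⟨h, hn⟩).reachable)

lemma quot_adj_of_ne {a b : V} (h : G.Adj a b) (hne : proj G C a ≠ proj G C b) :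
    (quotGraph G C).Adj (proj G C a) (proj G C b) :=
  ⟨hne, a, b, h, rfl, rfl⟩

lemma quot_dist_le_one {a b : V} (h : G.Adj a b) :
    (quotGraph G C).dist (proj G C a) (proj G C b) ≤ 1 := by
  by_cases hne : proj G C a = proj G C b
  · rw [hne, dist_self]; omega
  · rw [dist_eq_one_iff_adj.mpr (quot_adj_of_ne h hne)]

include hG in
lemma quot_connected : (quotGraph G C).Connected := by
  have hne : Nonempty V := hG.nonempty
  rw [connected_iff]
  refine ⟨?_, ⟨proj G C hne.some⟩⟩
  refine SimpleGraph.ConnectedComponent.ind₂ (fun a b => ?_)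
  show (quotGraph G C).Reachable (proj G C a) (proj G C b)
  obtain ⟨W⟩ := hG.preconnected a b
  induction W with
  | nil => exact Reachable.refl _
  | @cons a c b h W ih =>
    refine Reachable.trans ?_ ih
    by_cases hne : proj G C a = proj G C c
    · rw [hne]
    · exact (quot_adj_of_ne h hne).reachable

include hG in
lemma quot_dist_le {a b : V} (W : G.Walk a b) :
    (quotGraph G C).dist (proj G C a) (proj G C b) ≤ cnt C W := by
  induction W with
  | nil => rw [dist_self]; omega
  | @cons a c b h W ih =>
    rw [cnt_cons]
    by_cases hm : s(a, c) ∈ C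
    · rw [if_pos hm]
      have htri := (quot_connected hG (C := C)).dist_triangle
        (u := proj G C a) (v := proj G C c) (w := proj G C b)
      have h1 := quot_dist_le_one (C := C) h
      omega
    · rw [if_neg hm, proj_eq_of_not_mem h hm]
      omega

/-- a walk in `G \ C` yields a `G`-walk with no `C`-edges. -/
lemma walk_of_del {a b : V} (W : (G.deleteEdges C).Walk a b) :
    ∃ W' : G.Walk a b, cnt C W' = 0 := by
  induction W with
  | nil => exact ⟨.nil, rfl⟩
  | @cons a c b h W ih =>
    obtain ⟨W', hW'⟩ := ih
    obtain ⟨h', hn⟩ := SimpleGraph.deleteEdges_adj.mp h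
    exact ⟨.cons h' W', by rw [cnt_cons, if_neg hn, hW']⟩

lemma lift_walk {X Y : Comp G C} (W : (quotGraph G C).Walk X Y) :
    ∀ a : V, proj G C a = X →
      ∃ b : V, proj G C b = Y ∧ ∃ W' : G.Walk a b, cnt C W' ≤ W.length := by
  induction W with
  | nil => exact fun a ha => ⟨a, ha, .nil, by simp⟩
  | @cons X X' Y h W ih =>
    intro a ha
    obtain ⟨hne, x, x', hadj, hx, hx'⟩ := id h
    obtain ⟨W₀⟩ := (proj_eq_iff (C := C)).mp (ha.trans hx.symm)
    obtain ⟨W₁, hW₁⟩ := walk_of_del W₀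
    obtain ⟨b, hb, W', hW'⟩ := ih x' hx'
    refine ⟨b, hb, W₁.append (.cons hadj W'), ?_⟩
    rw [cnt_append, hW₁, cnt_cons, Walk.length_cons]
    split <;> omega

include hG hCE hCcl in
lemma quot_dist_eq (a b : V) :
    (quotGraph G C).dist (proj G C a) (proj G C b) = gc hG C a b := by
  refine le_antisymm ?_ ?_
  · unfold gc
    exact quot_dist_le hG (geo hG a b)
  · obtain ⟨W, hW⟩ := (quot_connected hG (C := C)).exists_walk_length_eq_dist
      (proj G C a) (proj G C b)
    obtain ⟨b', hb', W', hW'⟩ := lift_walk W a rfl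
    obtain ⟨W₀⟩ := (proj_eq_iff (C := C)).mp hb'
    obtain ⟨W₁, hW₁⟩ := walk_of_del W₀
    have := gc_le hG hCE hCcl (W'.append W₁)
    rw [cnt_append, hW₁] at this
    omega

include hG hCE hCcl in
/-- The master lemma: the quotient distance difference of a `C`-edge equals
the original distance difference. -/
lemma master {x y : V} (hxy : s(x, y) ∈ C) (z : V) :
    ((quotGraph G C).dist (proj G C x) (proj G C z) : ℤ)
        - (quotGraph G C).dist (proj G C y) (proj G C z)
      = (G.dist x z : ℤ) - G.dist y z := by
  have hadj : G.Adj x y := adjC hxy hCE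
  have hyx : s(y, x) ∈ C := by rwa [Sym2.eq_swap]
  have l1 : G.dist z y ≤ G.dist z x + 1 := dist_adj_le hG hadj z
  have l2 : G.dist z x ≤ G.dist z y + 1 := dist_adj_le hG hadj.symm z
  have c1 : G.dist z x = G.dist x z := dist_comm
  have c2 : G.dist z y = G.dist y z := dist_comm
  rw [quot_dist_eq hG hCE hCcl, quot_dist_eq hG hCE hCcl]
  rcases (by omega : G.dist x z = G.dist y z ∨ G.dist x z + 1 = G.dist y z
      ∨ G.dist y z + 1 = G.dist x z) with h | h | h
  · rw [gc_eq hG hCE hCcl hxy h, h]; ring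
  · rw [gc_succ hG hCE hCcl hxy h]
    push_cast
    omega
  · rw [gc_succ hG hCE hCcl hyx h]
    push_cast
    omega

end CutQuot


section CutSets

variable {G : SimpleGraph V} (hG : G.Connected) {C : Set (Sym2 V)}
  (hCE : C ⊆ G.edgeSet) (hCcl : ∀ f ∈ C, ∀ g, Theta G f g → g ∈ C)
  {u v : V} (huv : s(u, v) ∈ C)

lemma mem_supp_proj {X : Comp G C} {a : V} : a ∈ X.supp ↔ proj G C a = X :=
  SimpleGraph.ConnectedComponent.mem_supp_iff X a

lemma eDist_mk (u x y : V) : eDist G u s(x, y) = min (G.dist u x) (G.dist u y) := rfl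

include hCE hCcl in
lemma compNe {x y : V} (hm : s(x, y) ∈ C) : proj G C x ≠ proj G C y := by
  intro h
  have hadj : G.Adj x y := adjC hm hCE
  have hinv := invar_reach hCE hCcl hm ((proj_eq_iff (C := C)).mp h)
  have e1 : G.dist x x = 0 := dist_self
  have e2 : G.dist y y = 0 := dist_self
  have e3 : G.dist x y = 1 := dist_eq_one_iff_adj.mpr hadj
  have e4 : G.dist y x = 1 := dist_comm.trans e3
  rw [e1, e2, e3, e4] at hinv
  norm_num at hinv

include hG hCE hCcl huv in
lemma keyA {x y : V} (hadj : G.Adj x y) (hn : s(x, y) ∉ C) :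
    (eDist G u s(x, y) : ℤ) - eDist G v s(x, y)
      = ((quotGraph G C).dist (proj G C u) (proj G C x) : ℤ)
        - (quotGraph G C).dist (proj G C v) (proj G C x) := by
  have hpe : proj G C x = proj G C y := proj_eq_of_not_mem hadj hn
  have m1 := master hG hCE hCcl huv x
  have m2 := master hG hCE hCcl huv y
  rw [← hpe] at m2
  rw [eDist_mk, eDist_mk]
  omega

include hG hCE hCcl huv in
lemma keyB {x y : V} (hm : s(x, y) ∈ C) :
    (eDist G u s(x, y) : ℤ) - eDist G v s(x, y)
      = (eDist (quotGraph G C) (proj G C u) s(proj G C x, proj G C y) : ℤ)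
        - eDist (quotGraph G C) (proj G C v) s(proj G C x, proj G C y) := by
  have m1 := master hG hCE hCcl huv x
  have m2 := master hG hCE hCcl huv y
  have m3 := master hG hCE hCcl hm u
  have c1 : G.dist x u = G.dist u x := dist_comm
  have c2 : G.dist y u = G.dist u y := dist_comm
  have q1 : (quotGraph G C).dist (proj G C x) (proj G C u)
      = (quotGraph G C).dist (proj G C u) (proj G C x) := dist_comm
  have q2 : (quotGraph G C).dist (proj G C y) (proj G C u)
      = (quotGraph G C).dist (proj G C u) (proj G C y) := dist_comm
  rw [c1, c2, q1, q2] at m3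
  rw [eDist_mk, eDist_mk, eDist_mk, eDist_mk]
  omega

include hG hCE hCcl huv in
lemma Nset_eq :
    Nset G u v = ⋃ X ∈ Nset (quotGraph G C) (proj G C u) (proj G C v),
      SimpleGraph.ConnectedComponent.supp X := by
  ext x
  simp only [Nset, Set.mem_setOf_eq, Set.mem_iUnion, exists_prop]
  constructor
  · intro h
    refine ⟨proj G C x, ?_, mem_supp_proj.mpr rfl⟩
    have m := master hG hCE hCcl huv x
    omega
  · rintro ⟨X, hX, hx⟩
    rw [← mem_supp_proj.mp hx] at hX
    have m := master hG hCE hCcl huv x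
    omega

include hG hCE hCcl huv in
lemma N0set_eq :
    N0set G u v = ⋃ X ∈ N0set (quotGraph G C) (proj G C u) (proj G C v),
      SimpleGraph.ConnectedComponent.supp X := by
  ext x
  simp only [N0set, Set.mem_setOf_eq, Set.mem_iUnion, exists_prop]
  constructor
  · intro h
    refine ⟨proj G C x, ?_, mem_supp_proj.mpr rfl⟩
    have m := master hG hCE hCcl huv x
    omega
  · rintro ⟨X, hX, hx⟩
    rw [← mem_supp_proj.mp hx] at hX
    have m := master hG hCE hCcl huv x
    omega

include hG hCE hCcl huv in
lemma Mset_eq :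
    Mset G u v
      = (⋃ X ∈ Nset (quotGraph G C) (proj G C u) (proj G C v), compEdges G C X)
        ∪ (⋃ E' ∈ Mset (quotGraph G C) (proj G C u) (proj G C v), hatE G C E') := by
  ext f
  induction f using Sym2.ind with
  | _ x y =>
  simp only [Mset, Set.mem_setOf_eq, Set.mem_union, Set.mem_iUnion, exists_prop]
  constructor
  · rintro ⟨hfe, hlt⟩
    have hadj : G.Adj x y := G.mem_edgeSet.mp hfe
    by_cases hm : s(x, y) ∈ C
    · right
      have key := keyB hG hCE hCcl huv hm
      have hQadj := quot_adj_of_ne hadj (compNe hCE hCcl hm)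
      refine ⟨s(proj G C x, proj G C y), ⟨(quotGraph G C).mem_edgeSet.mpr hQadj, ?_⟩,
        hfe, by rw [Sym2.map_pair_eq]⟩
      omega
    · left
      have key := keyA hG hCE hCcl huv hadj hm
      refine ⟨proj G C x, ?_, ?_⟩
      · simp only [Nset, Set.mem_setOf_eq]; omega
      · refine ⟨(G.deleteEdges C).mem_edgeSet.mpr (SimpleGraph.deleteEdges_adj.mpr ⟨hadj, hm⟩), ?_⟩
        intro z hz
        rcases Sym2.mem_iff.mp hz with rfl | rfl
        · exact mem_supp_proj.mpr rfl
        · exact mem_supp_proj.mpr (proj_eq_of_not_mem hadj hm).symm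
  · rintro (⟨X, hX, hdel, hsupp⟩ | ⟨E', ⟨hE'e, hE'lt⟩, hfe, hmap⟩)
    · have hadj' := (G.deleteEdges C).mem_edgeSet.mp hdel
      obtain ⟨hadj, hn⟩ := SimpleGraph.deleteEdges_adj.mp hadj'
      have hXx : proj G C x = X := mem_supp_proj.mp (hsupp x (Sym2.mem_mk_left x y))
      rw [← hXx] at hX
      simp only [Nset, Set.mem_setOf_eq] at hX
      have key := keyA hG hCE hCcl huv hadj hn
      exact ⟨G.mem_edgeSet.mpr hadj, by omega⟩
    · have hadj : G.Adj x y := G.mem_edgeSet.mp hfe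
      rw [Sym2.map_pair_eq] at hmap
      have hm : s(x, y) ∈ C := by
        by_contra hn
        have hpe : proj G C x = proj G C y := proj_eq_of_not_mem hadj hn
        rw [← hmap, hpe] at hE'e
        exact (quotGraph G C).irrefl ((quotGraph G C).mem_edgeSet.mp hE'e)
      have key := keyB hG hCE hCcl huv hm
      rw [← hmap] at hE'lt
      exact ⟨hfe, by omega⟩

include hG hCE hCcl huv in
lemma M0set_eq :
    M0set G u v
      = (⋃ X ∈ N0set (quotGraph G C) (proj G C u) (proj G C v), compEdges G C X)
        ∪ (⋃ E' ∈ M0set (quotGraph G C) (proj G C u) (proj G C v), hatE G C E') := by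
  ext f
  induction f using Sym2.ind with
  | _ x y =>
  simp only [M0set, Set.mem_setOf_eq, Set.mem_union, Set.mem_iUnion, exists_prop]
  constructor
  · rintro ⟨hfe, hlt⟩
    have hadj : G.Adj x y := G.mem_edgeSet.mp hfe
    by_cases hm : s(x, y) ∈ C
    · right
      have key := keyB hG hCE hCcl huv hm
      have hQadj := quot_adj_of_ne hadj (compNe hCE hCcl hm)
      refine ⟨s(proj G C x, proj G C y), ⟨(quotGraph G C).mem_edgeSet.mpr hQadj, ?_⟩,
        hfe, by rw [Sym2.map_pair_eq]⟩
      omega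
    · left
      have key := keyA hG hCE hCcl huv hadj hm
      refine ⟨proj G C x, ?_, ?_⟩
      · simp only [N0set, Set.mem_setOf_eq]; omega
      · refine ⟨(G.deleteEdges C).mem_edgeSet.mpr (SimpleGraph.deleteEdges_adj.mpr ⟨hadj, hm⟩), ?_⟩
        intro z hz
        rcases Sym2.mem_iff.mp hz with rfl | rfl
        · exact mem_supp_proj.mpr rfl
        · exact mem_supp_proj.mpr (proj_eq_of_not_mem hadj hm).symm
  · rintro (⟨X, hX, hdel, hsupp⟩ | ⟨E', ⟨hE'e, hE'lt⟩, hfe, hmap⟩)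
    · have hadj' := (G.deleteEdges C).mem_edgeSet.mp hdel
      obtain ⟨hadj, hn⟩ := SimpleGraph.deleteEdges_adj.mp hadj'
      have hXx : proj G C x = X := mem_supp_proj.mp (hsupp x (Sym2.mem_mk_left x y))
      rw [← hXx] at hX
      simp only [N0set, Set.mem_setOf_eq] at hX
      have key := keyA hG hCE hCcl huv hadj hn
      exact ⟨G.mem_edgeSet.mpr hadj, by omega⟩
    · have hadj : G.Adj x y := G.mem_edgeSet.mp hfe
      rw [Sym2.map_pair_eq] at hmap
      have hm : s(x, y) ∈ C := by
        by_contra hn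
        have hpe : proj G C x = proj G C y := proj_eq_of_not_mem hadj hn
        rw [← hmap, hpe] at hE'e
        exact (quotGraph G C).irrefl ((quotGraph G C).mem_edgeSet.mp hE'e)
      have key := keyB hG hCE hCcl huv hm
      rw [← hmap] at hE'lt
      exact ⟨hfe, by omega⟩

end CutSets


section CutSums

variable {G : SimpleGraph V} (hG : G.Connected) {C : Set (Sym2 V)}
  (hCE : C ⊆ G.edgeSet) (hCcl : ∀ f ∈ C, ∀ g, Theta G f g → g ∈ C)
  {u v : V} (huv : s(u, v) ∈ C)

lemma supp_pairwise (S : Set (Comp G C)) :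
    S.PairwiseDisjoint SimpleGraph.ConnectedComponent.supp := by
  intro X _ Y _ hne
  rw [Function.onFun, Set.disjoint_left]
  intro a h1 h2
  exact hne (by rw [← mem_supp_proj.mp h1, mem_supp_proj.mp h2])

lemma compEdges_pairwise (S : Set (Comp G C)) :
    S.PairwiseDisjoint (compEdges G C) := by
  intro X _ Y _ hne
  rw [Function.onFun, Set.disjoint_left]
  intro f h1 h2
  induction f using Sym2.ind with
  | _ x y =>
    obtain ⟨-, h1⟩ := h1
    obtain ⟨-, h2⟩ := h2
    exact hne (by rw [← mem_supp_proj.mp (h1 x (Sym2.mem_mk_left x y)),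
      mem_supp_proj.mp (h2 x (Sym2.mem_mk_left x y))])

lemma hatE_pairwise (S : Set (Sym2 (Comp G C))) :
    S.PairwiseDisjoint (hatE G C) := by
  intro E1 _ E2 _ hne
  rw [Function.onFun, Set.disjoint_left]
  intro f h1 h2
  exact hne (by rw [← h1.2, h2.2])

lemma cross_disjoint (S : Set (Comp G C)) (T : Set (Sym2 (Comp G C)))
    (hT : T ⊆ (quotGraph G C).edgeSet) :
    Disjoint (⋃ X ∈ S, compEdges G C X) (⋃ E' ∈ T, hatE G C E') := by
  rw [Set.disjoint_left]
  intro f h1 h2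
  simp only [Set.mem_iUnion, exists_prop] at h1 h2
  obtain ⟨X, -, hdel, hsupp⟩ := h1
  obtain ⟨E', hE', -, hmap⟩ := h2
  induction f using Sym2.ind with
  | _ x y =>
    have hadj' := (G.deleteEdges C).mem_edgeSet.mp hdel
    have hpe : proj G C x = proj G C y :=
      (proj_eq_iff (C := C)).mpr hadj'.reachable
    rw [Sym2.map_pair_eq, hpe] at hmap
    rw [← hmap] at hE'
    exact (quotGraph G C).irrefl ((quotGraph G C).mem_edgeSet.mp (hT hE'))

variable [Finite V]

include hG hCE hCcl huv in
lemma nval_quot (wv : V → ℝ) :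
    nval G wv u v = nval (quotGraph G C) (qwv G C wv) (proj G C u) (proj G C v) := by
  haveI : Finite (Comp G C) := Quot.finite _
  rw [nval, vsum, Nset_eq hG hCE hCcl huv,
    finsum_mem_biUnion (supp_pairwise _) (Set.toFinite _) (fun X _ => Set.toFinite _)]
  rfl

include hG hCE hCcl huv in
lemma n0val_quot (wv : V → ℝ) :
    n0val G wv u v = n0val (quotGraph G C) (qwv G C wv) (proj G C u) (proj G C v) := by
  haveI : Finite (Comp G C) := Quot.finite _
  rw [n0val, vsum, N0set_eq hG hCE hCcl huv,
    finsum_mem_biUnion (supp_pairwise _) (Set.toFinite _) (fun X _ => Set.toFinite _)]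
  rfl

include hG hCE hCcl huv in
lemma mval_quot (sv : V → ℝ) (se : Sym2 V → ℝ) :
    mval G sv se u v
      = mval (quotGraph G C) (qsv G C sv se) (qse G C se) (proj G C u) (proj G C v) := by
  haveI : Finite (Comp G C) := Quot.finite _
  haveI : Finite (Sym2 (Comp G C)) := Finite.of_surjective
    (fun p : (Comp G C) × (Comp G C) => s(p.1, p.2)) (fun z => by
      induction z using Sym2.ind with
      | _ a b => exact ⟨(a, b), rfl⟩)
  have hv : vsum (Nset G u v) sv
      = ∑ᶠ X ∈ Nset (quotGraph G C) (proj G C u) (proj G C v), vsum X.supp sv := by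
    rw [vsum, Nset_eq hG hCE hCcl huv,
      finsum_mem_biUnion (supp_pairwise _) (Set.toFinite _) (fun X _ => Set.toFinite _)]
    rfl
  have he : vsum (Mset G u v) se
      = (∑ᶠ X ∈ Nset (quotGraph G C) (proj G C u) (proj G C v), vsum (compEdges G C X) se)
        + ∑ᶠ E' ∈ Mset (quotGraph G C) (proj G C u) (proj G C v), vsum (hatE G C E') se := by
    rw [vsum, Mset_eq hG hCE hCcl huv,
      finsum_mem_union (cross_disjoint _ _ (fun E' h => h.1)) (Set.toFinite _) (Set.toFinite _),
      finsum_mem_biUnion (compEdges_pairwise _) (Set.toFinite _) (fun X _ => Set.toFinite _),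
      finsum_mem_biUnion (hatE_pairwise _) (Set.toFinite _) (fun X _ => Set.toFinite _)]
    rfl
  rw [mval, mval, hv, he]
  show _ = (∑ᶠ X ∈ Nset (quotGraph G C) (proj G C u) (proj G C v),
      (vsum (compEdges G C X) se + vsum X.supp sv)) + _
  rw [finsum_mem_add_distrib (Set.toFinite _)]
  show _ = _ + _ + ∑ᶠ E' ∈ Mset (quotGraph G C) (proj G C u) (proj G C v), vsum (hatE G C E') se
  ring

include hG hCE hCcl huv in
lemma m0val_quot (sv : V → ℝ) (se : Sym2 V → ℝ) :
    m0val G sv se u v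
      = m0val (quotGraph G C) (qsv G C sv se) (qse G C se) (proj G C u) (proj G C v) := by
  haveI : Finite (Comp G C) := Quot.finite _
  haveI : Finite (Sym2 (Comp G C)) := Finite.of_surjective
    (fun p : (Comp G C) × (Comp G C) => s(p.1, p.2)) (fun z => by
      induction z using Sym2.ind with
      | _ a b => exact ⟨(a, b), rfl⟩)
  have hv : vsum (N0set G u v) sv
      = ∑ᶠ X ∈ N0set (quotGraph G C) (proj G C u) (proj G C v), vsum X.supp sv := by
    rw [vsum, N0set_eq hG hCE hCcl huv,
      finsum_mem_biUnion (supp_pairwise _) (Set.toFinite _) (fun X _ => Set.toFinite _)]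
    rfl
  have he : vsum (M0set G u v) se
      = (∑ᶠ X ∈ N0set (quotGraph G C) (proj G C u) (proj G C v), vsum (compEdges G C X) se)
        + ∑ᶠ E' ∈ M0set (quotGraph G C) (proj G C u) (proj G C v), vsum (hatE G C E') se := by
    rw [vsum, M0set_eq hG hCE hCcl huv,
      finsum_mem_union (cross_disjoint _ _ (fun E' h => h.1)) (Set.toFinite _) (Set.toFinite _),
      finsum_mem_biUnion (compEdges_pairwise _) (Set.toFinite _) (fun X _ => Set.toFinite _),
      finsum_mem_biUnion (hatE_pairwise _) (Set.toFinite _) (fun X _ => Set.toFinite _)]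
    rfl
  rw [m0val, m0val, hv, he]
  show _ = (∑ᶠ X ∈ N0set (quotGraph G C) (proj G C u) (proj G C v),
      (vsum (compEdges G C X) se + vsum X.supp sv)) + _
  rw [finsum_mem_add_distrib (Set.toFinite _)]
  show _ = _ + _ + ∑ᶠ E' ∈ M0set (quotGraph G C) (proj G C u) (proj G C v), vsum (hatE G C E') se
  ring

end CutSums

/-- For a connected strength-weighted graph and a regular function `F`,
with `e = uv ∈ E_i`, `U = ℓ_i(u)`, `V = ℓ_i(v)` and `E = UV` the corresponding edge of
the strength-weighted quotient graph `G_i = G_sw/E_i`: `F(e|G_sw) = F(E|G_i)`. -/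
theorem FEdge_eq_quotient {V : Type*} [Finite V] (G : SimpleGraph V) (hG : G.Connected)
    (wv sv : V → ℝ) (we se : Sym2 V → ℝ)
    (hwv : ∀ x, 0 ≤ wv x) (hsv : ∀ x, 0 ≤ sv x)
    (hwe : ∀ e, 0 ≤ we e) (hse : ∀ e, 0 ≤ se e)
    (F : ℝ → ℝ → ℝ → ℝ → ℝ → ℝ → ℝ) (hF : IsRegular F)
    {k : ℕ} (P : Fin k → Set (Sym2 V)) (hP : IsCPartition G P)
    (i : Fin k) (u v : V) (he : s(u, v) ∈ P i) :
    FEdge G wv sv se F hF s(u, v) =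
      FEdge (quotGraph G (P i)) (qwv G (P i) wv) (qsv G (P i) sv se) (qse G (P i) se)
        F hF s(proj G (P i) u, proj G (P i) v) := by
  classical
  have hCE : P i ⊆ G.edgeSet := hP.1 ▸ Set.subset_iUnion P i
  have hCcl : ∀ f ∈ P i, ∀ g, Theta G f g → g ∈ P i :=
    fun f hf g hfg => hP.2.2 i f hf g (Relation.TransGen.single hfg)
  have huv' : s(v, u) ∈ P i := by rwa [Sym2.eq_swap]
  simp only [FEdge, Sym2.lift_mk]
  rw [nval_quot hG hCE hCcl he wv, nval_quot hG hCE hCcl huv' wv,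
    mval_quot hG hCE hCcl he sv se, mval_quot hG hCE hCcl huv' sv se,
    n0val_quot hG hCE hCcl he wv, m0val_quot hG hCE hCcl he sv se]

end SzegedCut
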